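/- arXiv:1409.7344 — 4 statements merged into one kernel-verified Lean document; each statement's English description precedes it below -/
import Mathlib

section
/- Let T ∈ M_d(ℂ) be an invertible matrix, let r_i(T) denote the Euclidean norm of the i-th row of T, and let r_min(T) = min_{1≤i≤d} r_i(T). Then the smallest singular value σ_min(T) satisfies σ_min(T) ≥ ((d-1)/d)^{(d-1)/2} · |det T| · r_min(T) / ∏_{i=1}^d r_i(T). -/
/-!
Rescale the rows of `T` to unit length: `T = D B` with `D = diag(r_i)`, so
`|Tx| ≥ r_min |Bx|` and `|det B| = |det T| / ∏ r_i`. The eigenvalues `μ_i ≥ 0` of `Bᴴ B` have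
product `|det B|²` and sum `tr (Bᴴ B) = d`, the squared Frobenius norm of `B`. By AM-GM the
product of any `d - 1` of them is at most `(d / (d - 1)) ^ (d - 1)`, so every eigenvalue, and
hence `|Bx|²` for a unit vector `x`, is at least `((d - 1) / d) ^ (d - 1) |det B|²`.
-/

open Matrix Finset
open scoped ComplexOrder

theorem Real.prod_le_sum_div_card_pow {ι : Type*} (s : Finset ι) (a : ι → ℝ)
    (ha : ∀ i ∈ s, 0 ≤ a i) : ∏ i ∈ s, a i ≤ ((∑ i ∈ s, a i) / #s) ^ #s := by
  rcases s.eq_empty_or_nonempty with rfl | hs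
  · simp
  have hcard : (0 : ℝ) < #s := by exact_mod_cast hs.card_pos
  have amgm := Real.geom_mean_le_arith_mean s (fun _ ↦ 1) a (fun _ _ ↦ zero_le_one)
    (by simpa using hcard) ha
  simp only [Real.rpow_one, one_mul, sum_const, nsmul_eq_mul, mul_one] at amgm
  calc ∏ i ∈ s, a i = ((∏ i ∈ s, a i) ^ (#s : ℝ)⁻¹) ^ #s := by
        rw [← Real.rpow_natCast, ← Real.rpow_mul (prod_nonneg ha), inv_mul_cancel₀ hcard.ne',
          Real.rpow_one]
    _ ≤ ((∑ i ∈ s, a i) / #s) ^ #s :=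
        pow_le_pow_left₀ (Real.rpow_nonneg (prod_nonneg ha) _) amgm _

theorem Real.pow_mul_prod_le_of_sum_le_card {ι : Type*} [Fintype ι] [DecidableEq ι] (a : ι → ℝ)
    (ha : ∀ i, 0 ≤ a i) (hsum : ∑ i, a i ≤ Fintype.card ι) (k : ι) :
    (((Fintype.card ι : ℝ) - 1) / Fintype.card ι) ^ (Fintype.card ι - 1) * ∏ i, a i ≤ a k := by
  set N := Fintype.card ι
  have hN : (0 : ℝ) < N := by exact_mod_cast Fintype.card_pos_iff.mpr ⟨k⟩
  have hcard : #(univ.erase k) = N - 1 := by rw [card_erase_of_mem (mem_univ k), card_univ]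
  have hcard_real : ((N - 1 : ℕ) : ℝ) = N - 1 := by
    rw [Nat.cast_sub (Fintype.card_pos_iff.mpr ⟨k⟩), Nat.cast_one]
  have hN1 : (0 : ℝ) ≤ N - 1 := hcard_real ▸ Nat.cast_nonneg _
  set S := ∑ i ∈ univ.erase k, a i
  have hS : 0 ≤ S := sum_nonneg fun i _ ↦ ha i
  have hSN : S ≤ N := (sum_le_sum_of_subset_of_nonneg (subset_univ _) fun i _ _ ↦ ha i).trans hsum
  have hmean : ((N : ℝ) - 1) / N * (S / (N - 1)) ≤ 1 := by
    rcases eq_or_ne ((N : ℝ) - 1) 0 with h | h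
    · simp [h]
    · rw [div_mul_div_comm, mul_comm, mul_div_mul_right _ _ h, div_le_one hN]
      exact hSN
  have hrest : (((N : ℝ) - 1) / N) ^ (N - 1) * ∏ i ∈ univ.erase k, a i ≤ 1 := by
    calc (((N : ℝ) - 1) / N) ^ (N - 1) * ∏ i ∈ univ.erase k, a i
        ≤ (((N : ℝ) - 1) / N) ^ (N - 1) * (S / (N - 1)) ^ (N - 1) := by
          gcongr
          have := Real.prod_le_sum_div_card_pow (univ.erase k) a fun i _ ↦ ha i
          rwa [hcard, hcard_real] at this
      _ = (((N : ℝ) - 1) / N * (S / (N - 1))) ^ (N - 1) := (mul_pow _ _ _).symm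
      _ ≤ 1 := pow_le_one₀ (mul_nonneg (div_nonneg hN1 hN.le) (div_nonneg hS hN1)) hmean
  calc (((N : ℝ) - 1) / N) ^ (N - 1) * ∏ i, a i
      = a k * ((((N : ℝ) - 1) / N) ^ (N - 1) * ∏ i ∈ univ.erase k, a i) := by
        rw [← mul_prod_erase univ a (mem_univ k)]; ring
    _ ≤ a k := mul_le_of_le_one_right (ha k) hrest

namespace Matrix

variable {𝕜 n : Type*} [RCLike 𝕜] [Fintype n]

theorem star_dotProduct_self_eq_sum_norm_sq (v : n → 𝕜) :
    star v ⬝ᵥ v = ((∑ i, ‖v i‖ ^ 2 : ℝ) : 𝕜) := by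
  simp [dotProduct, RCLike.conj_mul]

theorem star_dotProduct_conjTranspose_mul_self_mulVec (B : Matrix n n 𝕜) (x : n → 𝕜) :
    star x ⬝ᵥ (Bᴴ * B) *ᵥ x = ((∑ i, ‖(B *ᵥ x) i‖ ^ 2 : ℝ) : 𝕜) := by
  rw [← mulVec_mulVec, dotProduct_mulVec, ← star_mulVec,
    star_dotProduct_self_eq_sum_norm_sq]

theorem trace_conjTranspose_mul_self_eq_sum_norm_sq (B : Matrix n n 𝕜) :
    (Bᴴ * B).trace = ((∑ i, ∑ j, ‖B i j‖ ^ 2 : ℝ) : 𝕜) := by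
  rw [sum_comm]
  simp [trace, mul_apply, RCLike.conj_mul]

variable [DecidableEq n]

open scoped MatrixOrder in
theorem IsHermitian.posSemidef_sub_smul_one {A : Matrix n n 𝕜} (hA : A.IsHermitian) {c : ℝ}
    (hc : ∀ i, c ≤ hA.eigenvalues i) : (A - (c : 𝕜) • 1).PosSemidef := by
  have : algebraMap ℝ (Matrix n n 𝕜) c ≤ A := by
    rw [algebraMap_le_iff_le_spectrum hA.isSelfAdjoint, hA.spectrum_real_eq_range_eigenvalues]
    rintro _ ⟨i, rfl⟩
    exact hc i
  simpa [Algebra.algebraMap_eq_smul_one] using Matrix.le_iff.mp this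

theorem mul_sum_norm_sq_le_sum_norm_sq_mulVec (B : Matrix n n 𝕜) {c : ℝ}
    (hc : ∀ i, c ≤ (isHermitian_conjTranspose_mul_self B).eigenvalues i) (x : n → 𝕜) :
    c * ∑ i, ‖x i‖ ^ 2 ≤ ∑ i, ‖(B *ᵥ x) i‖ ^ 2 := by
  have hA := (isHermitian_conjTranspose_mul_self B).posSemidef_sub_smul_one hc
  have := hA.dotProduct_mulVec_nonneg x
  rwa [sub_mulVec, dotProduct_sub, star_dotProduct_conjTranspose_mul_self_mulVec, smul_mulVec,
    one_mulVec, dotProduct_smul, star_dotProduct_self_eq_sum_norm_sq, smul_eq_mul,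
    ← RCLike.ofReal_mul, ← RCLike.ofReal_sub, RCLike.ofReal_nonneg, sub_nonneg] at this

theorem sum_eigenvalues_conjTranspose_mul_self (B : Matrix n n 𝕜) :
    ∑ i, (isHermitian_conjTranspose_mul_self B).eigenvalues i = ∑ i, ∑ j, ‖B i j‖ ^ 2 := by
  have := (isHermitian_conjTranspose_mul_self B).trace_eq_sum_eigenvalues
  rw [trace_conjTranspose_mul_self_eq_sum_norm_sq] at this
  exact_mod_cast this.symm

theorem prod_eigenvalues_conjTranspose_mul_self (B : Matrix n n 𝕜) :
    ∏ i, (isHermitian_conjTranspose_mul_self B).eigenvalues i = ‖B.det‖ ^ 2 := by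
  have := (isHermitian_conjTranspose_mul_self B).det_eq_prod_eigenvalues
  rw [det_mul, det_conjTranspose, RCLike.star_def, RCLike.conj_mul] at this
  exact_mod_cast this.symm

theorem pow_mul_norm_det_sq_le_eigenvalues (B : Matrix n n 𝕜)
    (hB : ∑ i, ∑ j, ‖B i j‖ ^ 2 ≤ Fintype.card n) (k : n) :
    (((Fintype.card n : ℝ) - 1) / Fintype.card n) ^ (Fintype.card n - 1) * ‖B.det‖ ^ 2 ≤
      (isHermitian_conjTranspose_mul_self B).eigenvalues k := by
  rw [← prod_eigenvalues_conjTranspose_mul_self]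
  exact Real.pow_mul_prod_le_of_sum_le_card _
    (posSemidef_conjTranspose_mul_self B).eigenvalues_nonneg
    (sum_eigenvalues_conjTranspose_mul_self B ▸ hB) k

theorem sum_norm_sq_row_pos_of_det_ne_zero {T : Matrix n n 𝕜} (hT : T.det ≠ 0) (i : n) :
    0 < ∑ j, ‖T i j‖ ^ 2 := by
  refine (sum_nonneg fun j _ ↦ sq_nonneg _).lt_of_ne' fun h ↦
    hT (det_eq_zero_of_row_eq_zero i fun j ↦ ?_)
  simpa using (sum_eq_zero_iff_of_nonneg fun j _ ↦ sq_nonneg _).mp h j (mem_univ j)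

theorem sq_mul_pow_mul_le_sum_norm_sq_mulVec (T : Matrix n n 𝕜) (hT : T.det ≠ 0) (r : n → ℝ)
    (hr : ∀ i, r i = √(∑ j, ‖T i j‖ ^ 2)) {ρ : ℝ} (hρ : 0 ≤ ρ) (hρr : ∀ i, ρ ≤ r i)
    (x : n → 𝕜) :
    ρ ^ 2 * ((((Fintype.card n : ℝ) - 1) / Fintype.card n) ^ (Fintype.card n - 1) *
        (‖T.det‖ / ∏ i, r i) ^ 2) * ∑ i, ‖x i‖ ^ 2 ≤ ∑ i, ‖(T *ᵥ x) i‖ ^ 2 := by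
  have hr_sq i : r i ^ 2 = ∑ j, ‖T i j‖ ^ 2 := by
    rw [hr i, Real.sq_sqrt (sum_nonneg fun j _ ↦ sq_nonneg _)]
  have hr_pos i : 0 < r i := by
    rw [hr i]; exact Real.sqrt_pos.mpr (sum_norm_sq_row_pos_of_det_ne_zero hT i)
  set B := diagonal (fun i ↦ ((r i)⁻¹ : 𝕜)) * T
  have hB_rows i : ∑ j, ‖B i j‖ ^ 2 = 1 := by
    simp only [B, diagonal_mul, norm_mul, norm_inv, RCLike.norm_ofReal, abs_of_pos (hr_pos i),
      mul_pow, ← mul_sum, ← hr_sq]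
    exact inv_pow (r i) 2 ▸ inv_mul_cancel₀ (pow_ne_zero 2 (hr_pos i).ne')
  have hB_det : ‖B.det‖ = ‖T.det‖ / ∏ i, r i := by
    simp [B, det_mul, prod_inv_distrib, abs_of_pos (hr_pos _), div_eq_inv_mul]
  have hTx i : ‖(T *ᵥ x) i‖ = r i * ‖(B *ᵥ x) i‖ := by
    simp [B, ← mulVec_mulVec, mulVec_diagonal, abs_of_pos (hr_pos i), (hr_pos i).ne']
  have hBx := mul_sum_norm_sq_le_sum_norm_sq_mulVec B
    (pow_mul_norm_det_sq_le_eigenvalues B (by simp [hB_rows])) x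
  calc ρ ^ 2 * ((((Fintype.card n : ℝ) - 1) / Fintype.card n) ^ (Fintype.card n - 1) *
        (‖T.det‖ / ∏ i, r i) ^ 2) * ∑ i, ‖x i‖ ^ 2
      ≤ ρ ^ 2 * ∑ i, ‖(B *ᵥ x) i‖ ^ 2 := by rw [← hB_det, mul_assoc]; gcongr
    _ = ∑ i, ρ ^ 2 * ‖(B *ᵥ x) i‖ ^ 2 := mul_sum _ _ _
    _ ≤ ∑ i, ‖(T *ᵥ x) i‖ ^ 2 :=
        sum_le_sum fun i _ ↦ by rw [hTx, mul_pow]; gcongr; exact hρr i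

end Matrix

/-- Hong–Pan: lower bound for the smallest singular value
`σ_min(T) = min_{|x|=1} |Tx|` of an invertible complex matrix in terms of
the row norms. -/
theorem stmt_3 (d : ℕ) (hd : 0 < d) (T : Matrix (Fin d) (Fin d) ℂ)
    (hT : T.det ≠ 0)
    (r : Fin d → ℝ) (hr : ∀ i, r i = Real.sqrt (∑ j, ‖T i j‖ ^ 2)) :
    ∀ x : Fin d → ℂ, (∑ i, ‖x i‖ ^ 2) = 1 →
      Real.sqrt (∑ i, ‖T.mulVec x i‖ ^ 2) ≥
        (((d : ℝ) - 1) / d) ^ (((d : ℝ) - 1) / 2) * ‖T.det‖ *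
          (Finset.univ.inf' ⟨⟨0, hd⟩, Finset.mem_univ _⟩ r) / ∏ i, r i := by
  intro x hx
  set r_min := Finset.univ.inf' ⟨⟨0, hd⟩, Finset.mem_univ _⟩ r
  have hr_nonneg i : 0 ≤ r i := hr i ▸ Real.sqrt_nonneg _
  have hr_min : 0 ≤ r_min := le_inf' _ _ fun i _ ↦ hr_nonneg i
  have key := T.sq_mul_pow_mul_le_sum_norm_sq_mulVec hT r hr hr_min
    (fun i ↦ inf'_le r (mem_univ i)) x
  rw [hx, mul_one, Fintype.card_fin] at key
  have hbase : (0 : ℝ) ≤ ((d : ℝ) - 1) / d :=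
    div_nonneg (by simp [Nat.one_le_cast.mpr hd]) d.cast_nonneg
  have hpow : (((d : ℝ) - 1) / d) ^ (((d : ℝ) - 1) / 2) =
      √((((d : ℝ) - 1) / d) ^ (d - 1)) := by
    rw [Real.sqrt_eq_rpow, ← Real.rpow_natCast, ← Real.rpow_mul hbase, Nat.cast_sub hd]
    ring_nf
  calc (((d : ℝ) - 1) / d) ^ (((d : ℝ) - 1) / 2) * ‖T.det‖ * r_min / ∏ i, r i
      = √(r_min ^ 2 * ((((d : ℝ) - 1) / d) ^ (d - 1) * (‖T.det‖ / ∏ i, r i) ^ 2)) := by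
        rw [Real.sqrt_mul (sq_nonneg _), Real.sqrt_mul (pow_nonneg hbase _), Real.sqrt_sq hr_min,
          Real.sqrt_sq (div_nonneg (norm_nonneg _) (prod_nonneg fun i _ ↦ hr_nonneg i)), hpow]
        ring
    _ ≤ √(∑ i, ‖T.mulVec x i‖ ^ 2) := Real.sqrt_le_sqrt key
end

section
/- Let n = (n₁,...,n_d) be a unit vector with n_d > 0, and let T_n^{-1} be the matrix with identity (d-1)×(d-1) upper-left block, zero last column except 1 in position (d,d), and last row (n₁/n_d,...,n_{d-1}/n_d,1). Then the smallest singular value of T_n^{-1} satisfies σ_min(T_n^{-1}) ≥ ((d-1)/d)^{(d-1)/2} · n_d. -/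
open Matrix

/-!
Write `x = (x', b)`. The matrix sends `x` to `(x', v ⬝ x' + b)` with `v = n' / n_d`, so
`|v|² = (1 - n_d²) / n_d²`. Cauchy–Schwarz applied to `b = w - v ⬝ x'`, where `w` is the last
coordinate of the image, gives `|x|² ≤ (2 + |v|²) |Sx|² ≤ (2 / n_d²) |Sx|²`, i.e.
`σ_min² ≥ n_d² / 2`. Bernoulli's inequality `(1 + 1/d)^d ≥ 2` shows that this dominates
`(d / (d + 1))^d n_d²` once `d ≥ 1`; for `d = 0` the matrix is `1` and `n_d = 1`.
-/

theorem sq_le_one_add_sum_sq_mul {ι : Type*} [Fintype ι] (v x : ι → ℝ) (w : ℝ) :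
    (w - ∑ i, v i * x i) ^ 2 ≤ (1 + ∑ i, v i ^ 2) * (w ^ 2 + ∑ i, x i ^ 2) := by
  simpa [Fintype.sum_option, sub_eq_add_neg] using
    Finset.sum_mul_sq_le_sq_mul_sq Finset.univ (fun o : Option ι => o.elim 1 v)
      (fun o => o.elim w (-x ·))

theorem sum_sq_add_sq_le_two_add_mul {ι : Type*} [Fintype ι] (v x : ι → ℝ) (b : ℝ) :
    ∑ i, x i ^ 2 + b ^ 2 ≤ (2 + ∑ i, v i ^ 2) * (∑ i, x i ^ 2 + (∑ i, v i * x i + b) ^ 2) := by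
  have hcs := sq_le_one_add_sum_sq_mul v x (∑ i, v i * x i + b)
  rw [add_sub_cancel_left] at hcs
  have hv : 0 ≤ ∑ i, v i ^ 2 := Finset.sum_nonneg fun i _ => sq_nonneg _
  have hx : 0 ≤ ∑ i, x i ^ 2 := Finset.sum_nonneg fun i _ => sq_nonneg _
  nlinarith [sq_nonneg (∑ i, v i * x i + b)]

theorem sum_sq_mulVec_of_shear {d : ℕ} (v x : Fin (d + 1) → ℝ)
    (S : Matrix (Fin (d + 1)) (Fin (d + 1)) ℝ)
    (hS : ∀ i j, S i j =
      if i = Fin.last d then (if j = Fin.last d then 1 else v j)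
      else (if i = j then 1 else 0)) :
    ∑ i, (S *ᵥ x) i ^ 2 = ∑ i : Fin d, x i.castSucc ^ 2 +
      (∑ i : Fin d, v i.castSucc * x i.castSucc + x (Fin.last d)) ^ 2 := by
  obtain rfl : S = Matrix.of fun i j => if i = Fin.last d then (if j = Fin.last d then 1 else v j)
      else (if i = j then 1 else 0) := Matrix.ext hS
  simp [Fin.sum_univ_castSucc, Matrix.mulVec, dotProduct, (Fin.castSucc_lt_last _).ne, ite_mul]

theorem sum_sq_le_mul_sum_sq_mulVec_of_shear {d : ℕ} (v x : Fin (d + 1) → ℝ)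
    (S : Matrix (Fin (d + 1)) (Fin (d + 1)) ℝ)
    (hS : ∀ i j, S i j =
      if i = Fin.last d then (if j = Fin.last d then 1 else v j)
      else (if i = j then 1 else 0)) :
    ∑ i, x i ^ 2 ≤ (2 + ∑ i : Fin d, v i.castSucc ^ 2) * ∑ i, (S *ᵥ x) i ^ 2 := by
  rw [sum_sq_mulVec_of_shear v x S hS, Fin.sum_univ_castSucc]
  exact sum_sq_add_sq_le_two_add_mul _ _ _

theorem div_add_one_pow_le_half {d : ℕ} (hd : d ≠ 0) : ((d : ℝ) / (d + 1)) ^ d ≤ 1 / 2 := by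
  have hd' : (0 : ℝ) < d := by positivity
  have hbern : (2 : ℝ) ≤ (1 + 1 / d) ^ d := by
    have := one_add_mul_le_pow (a := 1 / (d : ℝ)) (by linarith [one_div_pos.2 hd']) d
    rwa [mul_one_div_cancel hd'.ne', one_add_one_eq_two] at this
  rw [show (d : ℝ) / (d + 1) = (1 + 1 / (d : ℝ))⁻¹ by field_simp, inv_pow, one_div 2]
  exact inv_anti₀ two_pos hbern

theorem rpow_div_two_sq {a : ℝ} (ha : 0 ≤ a) (d : ℕ) : (a ^ ((d : ℝ) / 2)) ^ 2 = a ^ d := by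
  rw [Real.rpow_div_two_eq_sqrt _ ha, Real.rpow_natCast, ← pow_mul, mul_comm, pow_mul,
    Real.sq_sqrt ha]

/-- lower bound on the smallest singular value of the inverse
shear matrix `T_n^{-1}`: for every unit vector `x`,
`|T_n^{-1} x| ≥ ((d-1)/d)^{(d-1)/2} · n_d`. -/
theorem stmt_6 (d : ℕ) (n : Fin (d + 1) → ℝ)
    (hn_unit : ∑ i, n i ^ 2 = 1) (hnd : 0 < n (Fin.last d))
    (S : Matrix (Fin (d + 1)) (Fin (d + 1)) ℝ)
    (hS : ∀ i j, S i j =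
      if i = Fin.last d then
        (if j = Fin.last d then 1 else n j / n (Fin.last d))
      else (if i = j then 1 else 0)) :
    ∀ x : Fin (d + 1) → ℝ, (∑ i, x i ^ 2) = 1 →
      Real.sqrt (∑ i, (S.mulVec x i) ^ 2) ≥
        ((d : ℝ) / (d + 1)) ^ ((d : ℝ) / 2) * n (Fin.last d) := by
  intro x hx
  set c := n (Fin.last d)
  have hn_split : ∑ i : Fin d, n i.castSucc ^ 2 = 1 - c ^ 2 := by
    rw [Fin.sum_univ_castSucc] at hn_unit; linarith
  have hc_le : c ^ 2 ≤ 1 := by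
    linarith [hn_split ▸ Finset.sum_nonneg fun i _ => sq_nonneg (n (Fin.castSucc i))]
  have hhalf : c ^ 2 / 2 ≤ ∑ i, (S *ᵥ x) i ^ 2 := by
    have h := sum_sq_le_mul_sum_sq_mulVec_of_shear (fun j => n j / c) x S hS
    simp only [div_pow, ← Finset.sum_div, hn_split, hx] at h
    have hcoef : 2 + (1 - c ^ 2) / c ^ 2 ≤ 2 / c ^ 2 := by
      rw [show 2 + (1 - c ^ 2) / c ^ 2 = (1 + c ^ 2) / c ^ 2 by field_simp; ring]
      gcongr; linarith
    have h' := h.trans (mul_le_mul_of_nonneg_right hcoef (by positivity))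
    rw [div_mul_eq_mul_div, one_le_div (by positivity)] at h'
    linarith
  have hmain : ((d : ℝ) / (d + 1)) ^ d * c ^ 2 ≤ ∑ i, (S *ᵥ x) i ^ 2 := by
    rcases eq_or_ne d 0 with rfl | hd
    · rw [sum_sq_mulVec_of_shear _ x S hS]
      rw [Fin.sum_univ_one] at hx
      simpa [hx] using hc_le
    · calc ((d : ℝ) / (d + 1)) ^ d * c ^ 2 ≤ 1 / 2 * c ^ 2 := by
            gcongr; exact div_add_one_pow_le_half hd
        _ ≤ _ := by linarith
  rw [ge_iff_le, Real.le_sqrt (by positivity) (by positivity), mul_pow,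
    rpow_div_two_sq (by positivity)]
  exact hmain
end

section
/- Let 𝒩 ⊂ ℝ^p and X ⊂ ℝ^q be open sets, and let f: 𝒩 × X → ℝ be a function such that: (1) for every x ∈ X, the map n ↦ f(n,x) is Lipschitz on 𝒩 with Lipschitz constant bounded uniformly in x; and (2) there exists a constant L such that for every k ∈ {1,...,p}, h > 0, and n ∈ 𝒩, the difference quotient x ↦ (f(n + h e_k, x) - f(n,x))/h is Lipschitz on X with constant L (independent of h and n). Then there exists a set 𝒩₀ ⊂ 𝒩 of Lebesgue measure zero such that for every x ∈ X, the function n ↦ f(n,x) is differentiable at every point n ∈ 𝒩 \ 𝒩₀. -/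
/-!
For each `x`, Rademacher's theorem makes `f(·, x)` differentiable off a null set; `N₀` is the
union of these null sets over a countable dense subset `D` of `X`. Summing the Lipschitz bound on
the difference quotients along a coordinate staircase shows that `f(·, x) - f(·, y)` is
`L p |x - y|`-Lipschitz on each ball in `𝒩`. So at `n ∉ N₀`, `f(·, x)` differs from functions
`f(·, y)`, `y ∈ D`, differentiable at `n`, by functions of arbitrarily small Lipschitz constant;
their derivatives at `n` are then Cauchy, and the limit is a derivative of `f(·, x)` at `n`.
-/

open Function Set Filter Topology MeasureTheory Metric
open scoped NNReal

section Coordinatewise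

variable {ι : Type*} [DecidableEq ι]

theorem Function.update_eq_add_smul_single (m : ι → ℝ) (k : ι) (t : ℝ) :
    update m k t = m + (t - m k) • Pi.single k 1 := by
  ext i
  rcases eq_or_ne i k with rfl | hi <;> simp [*]

theorem abs_update_sub_le_of_forall_pos {S : Set (ι → ℝ)} {g : (ι → ℝ) → ℝ} {C : ℝ}
    (hg : ∀ k (h : ℝ), 0 < h → ∀ m ∈ S, m + h • Pi.single k 1 ∈ S →
      |g (m + h • Pi.single k 1) - g m| ≤ C * h)
    {m : ι → ℝ} (hm : m ∈ S) (k : ι) (t : ℝ) (ht : update m k t ∈ S) :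
    |g (update m k t) - g m| ≤ C * |t - m k| := by
  rcases lt_trichotomy (m k) t with hlt | rfl | hgt
  · rw [update_eq_add_smul_single] at ht ⊢
    rw [abs_of_pos (sub_pos.2 hlt)]
    exact hg k _ (sub_pos.2 hlt) m hm ht
  · simp
  · have hback : update m k t + (m k - t) • Pi.single k 1 = m := by
      simpa using (update_eq_add_smul_single (update m k t) k (m k)).symm
    have := hg k _ (sub_pos.2 hgt) _ ht (by rwa [hback])
    rwa [hback, abs_sub_comm, ← abs_of_pos (sub_pos.2 hgt), abs_sub_comm (m k)] at this

theorem abs_sub_le_mul_sum_of_abs_update_sub_le [Fintype ι] {I : ι → Set ℝ} {g : (ι → ℝ) → ℝ}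
    {C : ℝ} (hg : ∀ m ∈ univ.pi I, ∀ k t, update m k t ∈ univ.pi I →
      |g (update m k t) - g m| ≤ C * |t - m k|)
    {a b : ι → ℝ} (ha : a ∈ univ.pi I) (hb : b ∈ univ.pi I) :
    |g a - g b| ≤ C * ∑ i, |a i - b i| := by
  -- Move from `b` to `a` one coordinate at a time; the intermediate points stay in the box.
  suffices key : ∀ s : Finset ι, |g (s.piecewise a b) - g b| ≤ C * ∑ i ∈ s, |a i - b i| by
    simpa using key Finset.univ
  intro s
  induction s using Finset.induction_on with
  | empty => simp
  | insert j s hj ih =>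
    have hstep := hg _ (s.piecewise_mem_set_pi ha hb) j (a j)
      (by simpa [Finset.piecewise_insert] using (insert j s).piecewise_mem_set_pi ha hb)
    rw [Finset.piecewise_eq_of_notMem _ _ _ hj] at hstep
    rw [Finset.piecewise_insert, Finset.sum_insert hj, mul_add]
    exact (abs_sub_le _ _ _).trans (add_le_add hstep ih)

theorem lipschitzOnWith_of_abs_update_sub_le [Fintype ι] {I : ι → Set ℝ} {g : (ι → ℝ) → ℝ}
    {C : ℝ≥0} (hg : ∀ m ∈ univ.pi I, ∀ k t, update m k t ∈ univ.pi I →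
      |g (update m k t) - g m| ≤ C * |t - m k|) :
    LipschitzOnWith (C * Fintype.card ι) g (univ.pi I) := by
  refine LipschitzOnWith.of_dist_le_mul fun a ha b hb => ?_
  calc dist (g a) (g b) = |g a - g b| := Real.dist_eq _ _
    _ ≤ C * ∑ i, |a i - b i| := abs_sub_le_mul_sum_of_abs_update_sub_le hg ha hb
    _ ≤ C * ∑ _i : ι, dist a b := by
        gcongr with i
        exact (Real.dist_eq _ _).symm.trans_le (dist_le_pi_dist a b i)
    _ = _ := by simp [mul_assoc]

end Coordinatewise

theorem lipschitzOnWith_sub_of_lipschitzOnWith_slope {ι Y : Type*} [Fintype ι] [DecidableEq ι]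
    [PseudoMetricSpace Y] {𝒩 : Set (ι → ℝ)} {X : Set Y} {f : (ι → ℝ) → Y → ℝ} {L : ℝ≥0}
    (hslope : ∀ (k : ι) (h : ℝ), 0 < h → ∀ n ∈ 𝒩, n + h • (Pi.single k 1 : ι → ℝ) ∈ 𝒩 →
      LipschitzOnWith L (fun x => (f (n + h • (Pi.single k 1 : ι → ℝ)) x - f n x) / h) X)
    {n : ι → ℝ} {r : ℝ} (hr : 0 < r) (hball : ball n r ⊆ 𝒩) {y z : Y} (hy : y ∈ X) (hz : z ∈ X) :
    LipschitzOnWith (L * nndist y z * Fintype.card ι) (fun m => f m y - f m z) (ball n r) := by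
  have hinc : ∀ k (h : ℝ), 0 < h → ∀ m ∈ ball n r, m + h • Pi.single k 1 ∈ ball n r →
      |(f (m + h • Pi.single k 1) y - f (m + h • Pi.single k 1) z) - (f m y - f m z)|
        ≤ (L * nndist y z : ℝ≥0) * h := by
    intro k h hh m hm hm'
    have := (hslope k h hh m (hball hm) (hball hm')).dist_le_mul y hy z hz
    rw [Real.dist_eq, div_sub_div_same, abs_div, abs_of_pos hh, div_le_iff₀ hh] at this
    calc _ = |(f (m + h • Pi.single k 1) y - f m y) - (f (m + h • Pi.single k 1) z - f m z)| := by
          ring_nf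
      _ ≤ L * dist y z * h := this
      _ = _ := by simp
  rw [ball_pi n hr] at hinc ⊢
  exact lipschitzOnWith_of_abs_update_sub_le fun m hm k t ht =>
    abs_update_sub_le_of_forall_pos (g := fun m => f m y - f m z) hinc hm k t ht

theorem LipschitzOnWith.measure_setOf_not_differentiableAt_eq_zero
    {E F : Type*} [NormedAddCommGroup E] [NormedSpace ℝ E] [FiniteDimensional ℝ E]
    [MeasurableSpace E] [BorelSpace E] [NormedAddCommGroup F] [NormedSpace ℝ F]
    [FiniteDimensional ℝ F] {μ : Measure E} [μ.IsAddHaarMeasure] {C : ℝ≥0} {f : E → F}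
    {s : Set E} (hf : LipschitzOnWith C f s) (hs : IsOpen s) :
    μ {x ∈ s | ¬DifferentiableAt ℝ f x} = 0 := by
  refine measure_mono_null ?_ (ae_iff.1 hf.ae_differentiableWithinAt_of_mem)
  intro x hx h
  exact hx.2 ((h hx.1).differentiableAt (hs.mem_nhds hx.1))

theorem differentiableAt_of_tendsto_lipschitzOnWith_sub {E F : Type*} [NormedAddCommGroup E]
    [NormedSpace ℝ E] [NormedAddCommGroup F] [NormedSpace ℝ F] [CompleteSpace F]
    {g : E → F} {φ : ℕ → E → F} {ε : ℕ → ℝ≥0} {U : ℕ → Set E} {x : E}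
    (hε : Tendsto ε atTop (𝓝 0)) (hφ : ∀ j, DifferentiableAt ℝ (φ j) x)
    (hU : ∀ j, U j ∈ 𝓝 x) (hlip : ∀ j, LipschitzOnWith (ε j) (fun z => g z - φ j z) (U j)) :
    DifferentiableAt ℝ g x := by
  have hε' : Tendsto (fun j => (ε j : ℝ)) atTop (𝓝 0) := NNReal.tendsto_coe.2 hε
  set D := fun j => fderiv ℝ (φ j) x
  have hD : ∀ i j, dist (D i) (D j) ≤ ε i + ε j := by
    intro i j
    have hsub : LipschitzOnWith (ε j + ε i) (fun z => φ i z - φ j z) (U i ∩ U j) := by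
      simpa only [sub_sub_sub_cancel_left] using
        ((hlip j).mono inter_subset_right).sub ((hlip i).mono inter_subset_left)
    rw [dist_eq_norm, add_comm]
    exact ((hφ i).hasFDerivAt.sub (hφ j).hasFDerivAt).le_of_lipschitzOn
      (inter_mem (hU i) (hU j)) hsub
  have hcauchy : CauchySeq D := Metric.cauchySeq_iff.2 fun δ hδ => by
    obtain ⟨N, hN⟩ := eventually_atTop.1 (hε'.eventually (gt_mem_nhds (half_pos hδ)))
    exact ⟨N, fun m hm n hn => (hD m n).trans_lt (by linarith [hN m hm, hN n hn])⟩
  obtain ⟨A, hA⟩ := cauchySeq_tendsto_of_complete hcauchy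
  have hDA : ∀ j, ‖D j - A‖ ≤ ε j := fun j => by
    simpa [dist_eq_norm] using le_of_tendsto_of_tendsto' (tendsto_const_nhds.dist hA)
      (tendsto_const_nhds.add hε') (hD j)
  refine ⟨A, hasFDerivAt_iff_isLittleO.2 (Asymptotics.isLittleO_iff.2 fun c hc => ?_)⟩
  obtain ⟨j, hj⟩ := (hε'.eventually (gt_mem_nhds (by positivity : 0 < c / 3))).exists
  have hφj := Asymptotics.isLittleO_iff.1 (hasFDerivAt_iff_isLittleO.1 (hφ j).hasFDerivAt)
    (by positivity : 0 < c / 3)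
  filter_upwards [hφj, hU j] with z hz hzU
  have h₁ := (hlip j).norm_sub_le hzU (mem_of_mem_nhds (hU j))
  have h₃ := (D j - A).le_opNorm (z - x)
  calc ‖g z - g x - A (z - x)‖
      = ‖((g z - φ j z) - (g x - φ j x)) + (φ j z - φ j x - D j (z - x))
          + (D j - A) (z - x)‖ := by simp only [D, sub_apply]; abel_nf
    _ ≤ ε j * ‖z - x‖ + c / 3 * ‖z - x‖ + ‖D j - A‖ * ‖z - x‖ :=
        norm_add₃_le.trans (add_le_add_three h₁ hz h₃)
    _ ≤ c / 3 * ‖z - x‖ + c / 3 * ‖z - x‖ + c / 3 * ‖z - x‖ := by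
        have := norm_nonneg (z - x)
        gcongr
        exact (hDA j).trans hj.le
    _ = c * ‖z - x‖ := by ring

theorem stmt_8_general (p q : ℕ) (𝒩 : Set (Fin p → ℝ)) (X : Set (Fin q → ℝ))
    (hNopen : IsOpen 𝒩)
    (f : (Fin p → ℝ) → (Fin q → ℝ) → ℝ)
    (K : NNReal) (h1 : ∀ x ∈ X, LipschitzOnWith K (fun n => f n x) 𝒩)
    (L : NNReal)
    (h2 : ∀ (k : Fin p) (h : ℝ), 0 < h → ∀ n ∈ 𝒩, n + h • (Pi.single k 1 : Fin p → ℝ) ∈ 𝒩 →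
      LipschitzOnWith L (fun x => (f (n + h • (Pi.single k 1 : Fin p → ℝ)) x - f n x) / h) X) :
    ∃ N₀ ⊆ 𝒩, MeasureTheory.volume N₀ = 0 ∧
      ∀ x ∈ X, ∀ n ∈ 𝒩 \ N₀, DifferentiableAt ℝ (fun m => f m x) n := by
  obtain ⟨D, hDX, hDc, hXD⟩ :=
    (TopologicalSpace.IsSeparable.of_separableSpace X).exists_countable_dense_subset
  refine ⟨⋃ y ∈ D, {n ∈ 𝒩 | ¬DifferentiableAt ℝ (fun m => f m y) n},
    iUnion₂_subset fun _ _ => sep_subset _ _, ?_, ?_⟩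
  · exact (measure_biUnion_null_iff hDc).2 fun y hy =>
      (h1 y (hDX hy)).measure_setOf_not_differentiableAt_eq_zero hNopen
  rintro x hx n ⟨hn, hnD⟩
  obtain ⟨y, hyD, hyx⟩ := mem_closure_iff_seq_limit.1 (hXD hx)
  obtain ⟨r, hr, hball⟩ := Metric.isOpen_iff.1 hNopen n hn
  have hdist : Tendsto (fun j => nndist x (y j)) atTop (𝓝 0) := by
    simpa using (tendsto_const_nhds (x := x)).nndist hyx
  refine differentiableAt_of_tendsto_lipschitzOnWith_sub (φ := fun j m => f m (y j))
    (by simpa using (hdist.const_mul L).mul_const (Fintype.card (Fin p) : ℝ≥0))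
    (fun j => not_not.1 fun h => hnD (mem_biUnion (hyD j) ⟨hn, h⟩)) (fun _ => ball_mem_nhds n hr)
    (fun j => lipschitzOnWith_sub_of_lipschitzOnWith_slope h2 hr hball hx (hDX (hyD j)))

/-- universality of null sets: if `f(n,x)` is Lipschitz in `n`
uniformly in `x`, and its difference quotients in `n` are Lipschitz in `x`
uniformly in the increment `h` and the point `n`, then there is a single
Lebesgue-null set `𝒩₀ ⊂ 𝒩` outside which `n ↦ f(n,x)` is differentiable,
for every `x ∈ X` simultaneously. -/
theorem stmt_8 (p q : ℕ) (𝒩 : Set (Fin p → ℝ)) (X : Set (Fin q → ℝ))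
    (hNopen : IsOpen 𝒩) (hXopen : IsOpen X)
    (f : (Fin p → ℝ) → (Fin q → ℝ) → ℝ)
    (K : NNReal) (h1 : ∀ x ∈ X, LipschitzOnWith K (fun n => f n x) 𝒩)
    (L : NNReal)
    (h2 : ∀ (k : Fin p) (h : ℝ), 0 < h → ∀ n ∈ 𝒩, n + h • (Pi.single k 1 : Fin p → ℝ) ∈ 𝒩 →
      LipschitzOnWith L (fun x => (f (n + h • (Pi.single k 1 : Fin p → ℝ)) x - f n x) / h) X) :
    ∃ N₀ ⊆ 𝒩, MeasureTheory.volume N₀ = 0 ∧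
      ∀ x ∈ X, ∀ n ∈ 𝒩 \ N₀, DifferentiableAt ℝ (fun m => f m x) n :=
  stmt_8_general p q 𝒩 X hNopen f K h1 L h2
end

section
/- Let T be a d×d matrix with rational entries, n ∈ S^{d-1} a unit vector with n ∉ ℝℚ^d, and M ∈ O(d) with M e_d = n. Let f(y) = Σ_{ξ ∈ ℤ^d} c_ξ e^{2πi (Tξ)·y} with Σ |c_ξ| < ∞, and set h(z') = f(M(z',0)) for z' ∈ ℝ^{d-1}. Then for every φ ∈ L¹(ℝ^{d-1}), one has ∫_{ℝ^{d-1}} φ(z') h(λ z') dz' → (Σ_{ξ: Tξ = 0} c_ξ) · ∫_{ℝ^{d-1}} φ(z') dz' as λ → ∞. -/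
/-!
Expanding `h(λz') = Σ_ξ c_ξ e(w_ξ · λz')` with `w_ξ` the component of `Mᵀ(Tξ)` along the
hyperplane `e_d^⊥`, the absolutely summable coefficients allow integrating term by term and passing
to the limit term by term (dominated by `|c_ξ| ‖φ‖₁`). A term with `w_ξ ≠ 0` tends to `0` by the
Riemann–Lebesgue lemma. And `w_ξ = 0` forces the rational vector `Tξ` to be a multiple of
`M e_d = n`, which is impossible for `n ∉ ℝℚ^d` unless `Tξ = 0`.
-/

open Filter MeasureTheory Matrix
open scoped FourierTransform Topology

lemma exp_two_pi_I_mul_ofReal_eq_fourierChar (r : ℝ) :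
    Complex.exp (2 * Real.pi * Complex.I * r) = 𝐞 r := by
  rw [Real.fourierChar_apply]
  push_cast
  ring_nf

section IntegralFourierChar

variable {α κ : Type*} [MeasurableSpace α] {μ : Measure α}

lemma MeasureTheory.Integrable.mul_fourierChar {φ : α → ℂ} (hφ : Integrable φ μ) {f : α → ℝ}
    (hf : Measurable f) : Integrable (fun x => φ x * 𝐞 (f x)) μ := by
  refine hφ.mul_bdd ?_ (c := 1) (Eventually.of_forall fun x => (Circle.norm_coe _).le)
  exact (continuous_subtype_val.comp Real.continuous_fourierChar).measurable.comp hf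
    |>.aestronglyMeasurable

lemma norm_integral_mul_fourierChar_le {φ : α → ℂ} (hφ : Integrable φ μ) (f : α → ℝ) :
    ‖∫ x, φ x * 𝐞 (f x) ∂μ‖ ≤ ∫ x, ‖φ x‖ ∂μ :=
  norm_integral_le_of_norm_le hφ.norm <| Eventually.of_forall fun x => by
    rw [norm_mul, Circle.norm_coe, mul_one]

lemma integral_mul_tsum_fourierChar [Countable κ] {φ : α → ℂ} (hφ : Integrable φ μ)
    {c : κ → ℂ} (hc : Summable fun k => ‖c k‖) {f : κ → α → ℝ} (hf : ∀ k, Measurable (f k)) :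
    ∫ x, φ x * ∑' k, c k * 𝐞 (f k x) ∂μ = ∑' k, c k * ∫ x, φ x * 𝐞 (f k x) ∂μ := by
  have hint (k : κ) : Integrable (fun x => c k * (φ x * 𝐞 (f k x))) μ :=
    (hφ.mul_fourierChar (hf k)).const_mul (c k)
  have hsum : Summable fun k => ∫ x, ‖c k * (φ x * 𝐞 (f k x))‖ ∂μ := by
    simp only [norm_mul, Circle.norm_coe, mul_one, integral_const_mul]
    exact hc.mul_right _
  simp_rw [← integral_const_mul]
  rw [integral_tsum_of_summable_integral_norm hint hsum]
  simp only [← tsum_mul_left, mul_left_comm]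

end IntegralFourierChar

section RiemannLebesgue

variable {ι κ : Type*} [Fintype ι] {μ : Measure (ι → ℝ)}

theorem tendsto_integral_mul_fourierChar_dotProduct_smul [μ.IsAddHaarMeasure]
    (φ : (ι → ℝ) → ℂ) {w : ι → ℝ} (hw : w ≠ 0) :
    Tendsto (fun lam : ℝ => ∫ z, φ z * 𝐞 (w ⬝ᵥ (lam • z)) ∂μ) atTop (𝓝 0) := by
  let ℓ : StrongDual ℝ (ι → ℝ) := LinearMap.toContinuousLinearMap (dotProductBilin ℝ ℝ (-w))
  have hℓ : ℓ ≠ 0 := fun h0 => hw <| by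
    classical
    ext i
    simpa [ℓ, dotProductBilin] using congr(-$h0 (Pi.single i 1))
  have hsmul : Tendsto (fun lam : ℝ => lam • ℓ) atTop (cocompact _) := by
    rw [← Metric.cobounded_eq_cocompact, ← tendsto_norm_atTop_iff_cobounded]
    simp only [norm_smul, Real.norm_eq_abs]
    exact tendsto_abs_atTop_atTop.atTop_mul_const (norm_pos_iff.mpr hℓ)
  refine ((tendsto_integral_exp_smul_cocompact φ μ).comp hsmul).congr fun lam => ?_
  refine integral_congr_ae (Eventually.of_forall fun z => ?_)
  have hℓz : (lam • ℓ) z = -(w ⬝ᵥ (lam • z)) := by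
    simp [ℓ, dotProductBilin, dotProduct_smul]
  dsimp only
  rw [hℓz, neg_neg, Circle.smul_def, smul_eq_mul, mul_comm]

theorem tendsto_integral_mul_fourierChar_dotProduct_smul_ite [μ.IsAddHaarMeasure]
    (φ : (ι → ℝ) → ℂ) (w : ι → ℝ) :
    Tendsto (fun lam : ℝ => ∫ z, φ z * 𝐞 (w ⬝ᵥ (lam • z)) ∂μ) atTop
      (𝓝 (if w = 0 then ∫ z, φ z ∂μ else 0)) := by
  split_ifs with hw
  · simp [hw]
  · exact tendsto_integral_mul_fourierChar_dotProduct_smul φ hw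

theorem tendsto_integral_mul_tsum_fourierChar_dotProduct_smul [μ.IsAddHaarMeasure] [Countable κ]
    {φ : (ι → ℝ) → ℂ} (hφ : Integrable φ μ) {c : κ → ℂ} (hc : Summable fun k => ‖c k‖)
    (w : κ → ι → ℝ) :
    Tendsto (fun lam : ℝ => ∫ z, φ z * ∑' k, c k * 𝐞 (w k ⬝ᵥ (lam • z)) ∂μ) atTop
      (𝓝 ((∑' k, if w k = 0 then c k else 0) * ∫ z, φ z ∂μ)) := by
  have hmeas (lam : ℝ) (k : κ) : Measurable fun z : ι → ℝ => w k ⬝ᵥ (lam • z) := by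
    fun_prop
  simp_rw [integral_mul_tsum_fourierChar hφ hc (hmeas _), ← tsum_mul_right, ite_mul, zero_mul]
  refine tendsto_tsum_of_dominated_convergence (hc.mul_right (∫ z, ‖φ z‖ ∂μ)) (fun k => ?_)
    (Eventually.of_forall fun lam k => ?_)
  · simpa only [mul_ite, mul_zero] using
      (tendsto_integral_mul_fourierChar_dotProduct_smul_ite φ (w k)).const_mul (c k)
  · rw [norm_mul]
    exact mul_le_mul_of_nonneg_left (norm_integral_mul_fourierChar_le hφ _) (norm_nonneg _)

end RiemannLebesgue

lemma dotProduct_mulVec_snoc_zero {R : Type*} [CommSemiring R] {m : ℕ} (u : Fin (m + 1) → R)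
    (M : Matrix (Fin (m + 1)) (Fin (m + 1)) R) (z : Fin m → R) :
    u ⬝ᵥ M *ᵥ Fin.snoc z 0 = (fun j => (u ᵥ* M) j.castSucc) ⬝ᵥ z := by
  rw [dotProduct_mulVec]
  simp [dotProduct, Fin.sum_univ_castSucc]

lemma eq_smul_mulVec_single_last_of_vecMul_castSucc_eq_zero {m : ℕ}
    {M : Matrix (Fin (m + 1)) (Fin (m + 1)) ℝ} (hM : M ∈ orthogonalGroup (Fin (m + 1)) ℝ)
    {u : Fin (m + 1) → ℝ} (hu : ∀ j : Fin m, (u ᵥ* M) j.castSucc = 0) :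
    u = (u ᵥ* M) (Fin.last m) • M *ᵥ Pi.single (Fin.last m) 1 := by
  set a := (u ᵥ* M) (Fin.last m)
  have hsingle : u ᵥ* M = Pi.single (Fin.last m) a := by
    ext i
    induction i using Fin.lastCases with
    | last => simp [a]
    | cast j => simp [hu j, (Fin.castSucc_lt_last j).ne]
  have hMMt : M * Mᵀ = 1 := (mem_orthogonalGroup_iff _ _).mp hM
  calc u = M *ᵥ (u ᵥ* M) := by rw [← mulVec_transpose, mulVec_mulVec, hMMt, one_mulVec]
    _ = _ := by rw [hsingle, ← mulVec_smul, ← Pi.single_smul, smul_eq_mul, mul_one]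

lemma vecMul_castSucc_eq_zero_iff {m : ℕ} {n : Fin (m + 1) → ℝ}
    (hn_irr : ¬ ∃ (a : ℝ) (q : Fin (m + 1) → ℚ), n = a • fun i => (q i : ℝ))
    {M : Matrix (Fin (m + 1)) (Fin (m + 1)) ℝ} (hM : M ∈ orthogonalGroup (Fin (m + 1)) ℝ)
    (hMe : M *ᵥ Pi.single (Fin.last m) 1 = n) (q : Fin (m + 1) → ℚ) :
    (fun j : Fin m => ((fun i => (q i : ℝ)) ᵥ* M) j.castSucc) = 0 ↔ q = 0 := by
  refine ⟨fun hq => ?_, fun hq => by subst hq; ext j; simp [vecMul, dotProduct]⟩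
  have hqn := eq_smul_mulVec_single_last_of_vecMul_castSucc_eq_zero hM (congrFun hq)
  rw [hMe] at hqn
  set a := ((fun i => (q i : ℝ)) ᵥ* M) (Fin.last m)
  by_cases ha : a = 0
  · ext i
    simpa [ha] using congrFun hqn i
  · exact absurd ⟨a⁻¹, q, by rw [hqn, smul_smul, inv_mul_cancel₀ ha, one_smul]⟩ hn_irr

theorem stmt_11_general (m : ℕ) (n : Fin (m + 1) → ℝ)
    (hn_irr : ¬ ∃ (a : ℝ) (q : Fin (m + 1) → ℚ), n = a • fun i => (q i : ℝ))
    (T : Matrix (Fin (m + 1)) (Fin (m + 1)) ℚ)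
    (M : Matrix (Fin (m + 1)) (Fin (m + 1)) ℝ)
    (hM : M ∈ Matrix.orthogonalGroup (Fin (m + 1)) ℝ)
    (hMe : M.mulVec (Pi.single (Fin.last m) 1) = n)
    (c : (Fin (m + 1) → ℤ) → ℂ)
    (hc : Summable fun ξ => ‖c ξ‖)
    (f : (Fin (m + 1) → ℝ) → ℂ)
    (hf : ∀ y, f y = ∑' ξ : Fin (m + 1) → ℤ,
      c ξ * Complex.exp (2 * Real.pi * Complex.I *
        (((fun i => ((T.mulVec fun j => (ξ j : ℚ)) i : ℝ)) ⬝ᵥ y : ℝ) : ℂ)))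
    (h : (Fin m → ℝ) → ℂ)
    (hh : ∀ z' : Fin m → ℝ, h z' = f (M.mulVec (Fin.snoc z' 0))) :
    ∀ φ : (Fin m → ℝ) → ℂ, Integrable φ →
      Tendsto (fun lam : ℝ => ∫ z' : Fin m → ℝ, φ z' * h (lam • z'))
        atTop
        (nhds ((∑' ξ : Fin (m + 1) → ℤ,
          if T.mulVec (fun j => (ξ j : ℚ)) = 0 then c ξ else 0) *
            ∫ z' : Fin m → ℝ, φ z')) := by
  intro φ hφ
  let w (ξ : Fin (m + 1) → ℤ) (j : Fin m) : ℝ :=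
    ((fun i => ((T *ᵥ fun j => (ξ j : ℚ)) i : ℝ)) ᵥ* M) j.castSucc
  have h_eq_tsum (z : Fin m → ℝ) : h z = ∑' ξ, c ξ * 𝐞 (w ξ ⬝ᵥ z) := by
    simp only [hh, hf, dotProduct_mulVec_snoc_zero, exp_two_pi_I_mul_ofReal_eq_fourierChar, w]
  have hmean : (∑' ξ : Fin (m + 1) → ℤ, if T *ᵥ (fun j => (ξ j : ℚ)) = 0 then c ξ else 0)
      = ∑' ξ, if w ξ = 0 then c ξ else 0 := by
    simp only [w, vecMul_castSucc_eq_zero_iff hn_irr hM hMe]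
  simpa only [h_eq_tsum, hmean] using tendsto_integral_mul_tsum_fourierChar_dotProduct_smul hφ hc w

/-- mean value of an almost-periodic function on an irrational
hyperplane: with `f(y) = Σ_ξ c_ξ e^{2πi (Tξ)·y}` (T rational, `Σ|c_ξ| < ∞`)
and `h(z') = f(M(z',0))` where `M ∈ O(d)`, `M e_d = n ∉ ℝℚ^d`, one has
`∫ φ(z') h(λz') dz' → (Σ_{Tξ=0} c_ξ) ∫ φ` for every integrable `φ`. -/
theorem stmt_11 (m : ℕ) (n : Fin (m + 1) → ℝ)
    (hn_unit : ∑ i, n i ^ 2 = 1)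
    (hn_irr : ¬ ∃ (a : ℝ) (q : Fin (m + 1) → ℚ), n = a • fun i => (q i : ℝ))
    (T : Matrix (Fin (m + 1)) (Fin (m + 1)) ℚ)
    (M : Matrix (Fin (m + 1)) (Fin (m + 1)) ℝ)
    (hM : M ∈ Matrix.orthogonalGroup (Fin (m + 1)) ℝ)
    (hMe : M.mulVec (Pi.single (Fin.last m) 1) = n)
    (c : (Fin (m + 1) → ℤ) → ℂ)
    (hc : Summable fun ξ => ‖c ξ‖)
    (f : (Fin (m + 1) → ℝ) → ℂ)
    (hf : ∀ y, f y = ∑' ξ : Fin (m + 1) → ℤ,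
      c ξ * Complex.exp (2 * Real.pi * Complex.I *
        (((fun i => ((T.mulVec fun j => (ξ j : ℚ)) i : ℝ)) ⬝ᵥ y : ℝ) : ℂ)))
    (h : (Fin m → ℝ) → ℂ)
    (hh : ∀ z' : Fin m → ℝ, h z' = f (M.mulVec (Fin.snoc z' 0))) :
    ∀ φ : (Fin m → ℝ) → ℂ, Integrable φ →
      Tendsto (fun lam : ℝ => ∫ z' : Fin m → ℝ, φ z' * h (lam • z'))
        atTop
        (nhds ((∑' ξ : Fin (m + 1) → ℤ,
          if T.mulVec (fun j => (ξ j : ℚ)) = 0 then c ξ else 0) *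
            ∫ z' : Fin m → ℝ, φ z')) :=
  stmt_11_general m n hn_irr T M hM hMe c hc f hf h hh
end
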